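/- arXiv:2205.13906 — 3 statements merged into one kernel-verified Lean document; each statement's English description precedes it below -/
import Mathlib

section
/- Let R be a commutative ring, R' a faithfully flat R-algebra, G ⊆ GL_n(R) a finite subgroup, and d a natural number. Then R[x_1,…,x_n]^G is generated as an R-algebra by its homogeneous elements of degree at most d if and only if R'[x_1,…,x_n]^G (where G acts via its image in GL_n(R')) is generated as an R'-algebra by its homogeneous elements of degree at most d. In particular β_{R'}(G) = β_R(G). -/
open MvPolynomial TensorProduct

set_option synthInstance.maxHeartbeats 1000000
set_option maxHeartbeats 1000000

/-- The action of `σ ∈ GLₙ(R)` on the polynomial ring `R[x₁,…,xₙ]`,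
given by `σ(f) = f(σ⁻¹ (x₁,…,xₙ))`. -/
noncomputable def glAct {R : Type*} [CommRing R] {n : ℕ}
    (σ : Matrix.GeneralLinearGroup (Fin n) R) :
    MvPolynomial (Fin n) R →ₐ[R] MvPolynomial (Fin n) R :=
  MvPolynomial.aeval fun i =>
    ∑ j, ((σ⁻¹ : Matrix.GeneralLinearGroup (Fin n) R) : Matrix (Fin n) (Fin n) R) i j •
      MvPolynomial.X j

/-- The ring of invariants `R[x₁,…,xₙ]^G` of a subgroup `G ⊆ GLₙ(R)`,
as a subalgebra of `R[x₁,…,xₙ]`. -/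
noncomputable def invariants {R : Type*} [CommRing R] {n : ℕ}
    (G : Subgroup (Matrix.GeneralLinearGroup (Fin n) R)) :
    Subalgebra R (MvPolynomial (Fin n) R) :=
  ⨅ σ ∈ G, AlgHom.equalizer (glAct σ) (AlgHom.id R _)

/-- The map `GLₙ(R) → GLₙ(R')` induced by a ring homomorphism `R → R'`. -/
noncomputable def glMap {R R' : Type*} [CommRing R] [CommRing R'] {n : ℕ} (f : R →+* R') :
    Matrix.GeneralLinearGroup (Fin n) R →* Matrix.GeneralLinearGroup (Fin n) R' :=
  Units.map (RingHom.toMonoidHom (RingHom.mapMatrix f))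

/-- `R[x₁,…,xₙ]^G` is generated as an `R`-algebra by its homogeneous elements of
degree at most `d`. -/
def genByDeg {n : ℕ} (R : Type*) [CommRing R]
    (G : Subgroup (Matrix.GeneralLinearGroup (Fin n) R)) (d : ℕ) : Prop :=
  Algebra.adjoin R {f : MvPolynomial (Fin n) R |
    f ∈ invariants G ∧ ∃ i ≤ d, MvPolynomial.IsHomogeneous f i} = invariants G

/-- `f₁, …, fₘ` is a homogeneous system of parameters for `R[x₁,…,xₙ]^G`:
the `fᵢ` are invariant, homogeneous of positive degree, algebraically independent over `R`,
and `R[x₁,…,xₙ]^G` is a finitely generated module over `R[f₁,…,fₘ]`. -/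
def IsHSOPInv {n m : ℕ} {R : Type*} [CommRing R]
    (G : Subgroup (Matrix.GeneralLinearGroup (Fin n) R))
    (f : Fin m → MvPolynomial (Fin n) R) : Prop :=
  (∀ i, f i ∈ invariants G) ∧
  (∀ i, ∃ d : ℕ, 0 < d ∧ (f i).IsHomogeneous d) ∧
  AlgebraicIndependent R f ∧
  ∃ s : Finset (MvPolynomial (Fin n) R),
    ↑s ⊆ (invariants G : Set (MvPolynomial (Fin n) R)) ∧
    (invariants G : Set (MvPolynomial (Fin n) R)) ⊆
      (Submodule.span (Algebra.adjoin R (Set.range f)) (s : Set (MvPolynomial (Fin n) R)) :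
        Submodule (Algebra.adjoin R (Set.range f)) (MvPolynomial (Fin n) R))

/-- A commutative ring `T` is Cohen-Macaulay if for every maximal ideal `P` of `T`,
the localization `T_P` contains a regular sequence lying in its maximal ideal whose
length equals the Krull dimension of `T_P` (i.e. `depth T_P = dim T_P`). -/
def IsCohenMacaulayRing (T : Type*) [CommRing T] : Prop :=
  ∀ (P : Ideal T) (hP : P.IsMaximal),
    haveI : P.IsPrime := hP.isPrime
    ∃ rs : List (Localization.AtPrime P),
      (∀ r ∈ rs, r ∈ IsLocalRing.maximalIdeal (Localization.AtPrime P)) ∧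
      RingTheory.Sequence.IsRegular (Localization.AtPrime P) rs ∧
      (rs.length : WithBot ℕ∞) = ringKrullDim (Localization.AtPrime P)

/-! Invariants are the common kernel of the finitely many linear maps `glAct σ - id`, and flat
base change commutes with finite intersections of kernels, so `R'[x]^G` is the `R'`-span of the
image of `R[x]^G`. Taking homogeneous components of that span shows that the low-degree
invariants over `R'` generate the same subalgebra as the images of those over `R`, which is the
`R'`-span of the image of the subalgebra they generate over `R`. Faithful flatness makes
`P ↦ R' ⊗ P` injective on submodules, so the two generation statements are equivalent. -/

theorem Submodule.baseChange_iInf_ker {R M N ι : Type*} [CommRing R] [AddCommGroup M]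
    [Module R M] [AddCommGroup N] [Module R N] (A : Type*) [CommRing A] [Algebra R A]
    [Module.Flat R A] [Finite ι] (f : ι → M →ₗ[R] N) :
    (⨅ i, LinearMap.ker (f i)).baseChange A = ⨅ i, LinearMap.ker ((f i).baseChange A) := by
  classical
  have := Fintype.ofFinite ι
  have hpi : TensorProduct.piRight R A A (fun _ : ι => N) ∘ₗ (LinearMap.pi f).baseChange A
      = LinearMap.pi fun i => (f i).baseChange A := by
    ext i m
    simp
  rw [← LinearMap.ker_pi, ← LinearMap.ker_pi, ← hpi, LinearEquiv.ker_comp]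
  exact (Module.Flat.ker_lTensor_eq A A _).symm

theorem MvPolynomial.apply_homogeneousComponent {σ R S : Type*} [CommSemiring R]
    [CommSemiring S]
    (g : MvPolynomial σ R →+ MvPolynomial σ S)
    (hg : ∀ (n : ℕ) (p : MvPolynomial σ R), IsHomogeneous p n → IsHomogeneous (g p) n)
    (n : ℕ) (p : MvPolynomial σ R) :
    g (homogeneousComponent n p) = homogeneousComponent n (g p) := by
  induction p using MvPolynomial.induction_on' with
  | monomial d c =>
    have hd : IsHomogeneous (monomial d c) d.degree := isHomogeneous_monomial c rfl
    rw [homogeneousComponent_of_mem hd, homogeneousComponent_of_mem (hg _ _ hd)]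
    split_ifs <;> simp
  | add p q hp hq => simp only [map_add, hp, hq]

theorem Algebra.span_image_adjoin {R A B : Type*} (R' : Type*) [CommSemiring R] [CommSemiring R']
    [Semiring A] [Semiring B] [Algebra R A] [Algebra R R'] [Algebra R' B] [Algebra R B]
    [IsScalarTower R R' B] (f : A →ₐ[R] B) (s : Set A) :
    Submodule.span R' (f '' Algebra.adjoin R s) =
      Subalgebra.toSubmodule (Algebra.adjoin R' (f '' s)) := by
  apply le_antisymm
  · rw [Submodule.span_le]
    rintro _ ⟨a, ha, rfl⟩
    change f a ∈ Algebra.adjoin R' (f '' s)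
    induction ha using Algebra.adjoin_induction with
    | mem x hx => exact Algebra.subset_adjoin ⟨x, hx, rfl⟩
    | algebraMap r =>
      rw [AlgHom.commutes, IsScalarTower.algebraMap_apply R R' B]
      exact Subalgebra.algebraMap_mem _ _
    | add x y _ _ hx hy => rw [map_add]; exact add_mem hx hy
    | mul x y _ _ hx hy => rw [map_mul]; exact mul_mem hx hy
  · have hclosure : Submonoid.closure s ≤ (Algebra.adjoin R s).toSubmonoid :=
      Submonoid.closure_le.2 Algebra.subset_adjoin
    rw [Algebra.adjoin_eq_span, ← MonoidHom.map_mclosure f, Submonoid.coe_map]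
    exact Submodule.span_mono (Set.image_mono hclosure)

section Invariants

variable {n : ℕ} {R R' : Type*} [CommRing R] [CommRing R'] [Algebra R R']

theorem mem_invariants {G : Subgroup (Matrix.GeneralLinearGroup (Fin n) R)}
    {f : MvPolynomial (Fin n) R} :
    f ∈ invariants G ↔ ∀ σ ∈ G, glAct σ f = f := by
  simp [invariants, Algebra.mem_iInf, AlgHom.mem_equalizer]

theorem isHomogeneous_glAct (σ : Matrix.GeneralLinearGroup (Fin n) R)
    {f : MvPolynomial (Fin n) R} {m : ℕ} (hf : f.IsHomogeneous m) :
    (glAct σ f).IsHomogeneous m := by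
  rw [← one_mul m]
  refine hf.aeval _ fun i => IsHomogeneous.sum _ _ _ fun j _ => ?_
  rw [Algebra.smul_def]
  exact (isHomogeneous_X _ _).C_mul _

theorem homogeneousComponent_mem_invariants
    {G : Subgroup (Matrix.GeneralLinearGroup (Fin n) R)}
    {f : MvPolynomial (Fin n) R} (hf : f ∈ invariants G) (i : ℕ) :
    homogeneousComponent i f ∈ invariants G := by
  rw [mem_invariants] at hf ⊢
  intro σ hσ
  rw [← AlgHom.coe_toAddMonoidHom,
    apply_homogeneousComponent _ (fun _ _ => isHomogeneous_glAct σ), AlgHom.coe_toAddMonoidHom,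
    hf σ hσ]

theorem map_glAct (σ : Matrix.GeneralLinearGroup (Fin n) R) (f : MvPolynomial (Fin n) R) :
    MvPolynomial.map (algebraMap R R') (glAct σ f) =
      glAct (glMap (algebraMap R R') σ) (MvPolynomial.map (algebraMap R R') f) := by
  induction f using MvPolynomial.induction_on with
  | C a => simp [glAct]
  | add p q hp hq => simp only [map_add, hp, hq]
  | mul_X p i hp =>
    rw [map_mul, map_mul, map_mul, hp, map_X]
    simp [glAct, glMap, Algebra.smul_def]

theorem map_mem_invariants {G : Subgroup (Matrix.GeneralLinearGroup (Fin n) R)}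
    {f : MvPolynomial (Fin n) R} (hf : f ∈ invariants G) :
    MvPolynomial.map (algebraMap R R') f ∈ invariants (G.map (glMap (algebraMap R R'))) := by
  rw [mem_invariants] at hf ⊢
  rintro _ ⟨σ, hσ, rfl⟩
  rw [← map_glAct, hf σ hσ]

theorem algebraTensorAlgEquiv_baseChange_glAct (σ : Matrix.GeneralLinearGroup (Fin n) R)
    (t : R' ⊗[R] MvPolynomial (Fin n) R) :
    algebraTensorAlgEquiv R R' ((glAct σ).toLinearMap.baseChange R' t) =
      glAct (glMap (algebraMap R R') σ) (algebraTensorAlgEquiv R R' t) := by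
  induction t with
  | zero => simp
  | tmul r p => simp [map_glAct]
  | add t₁ t₂ h₁ h₂ => simp only [map_add, h₁, h₂]

theorem toSubmodule_invariants_eq_iInf_ker (G : Subgroup (Matrix.GeneralLinearGroup (Fin n) R)) :
    Subalgebra.toSubmodule (invariants G) =
      ⨅ σ : G, LinearMap.ker ((glAct (σ : Matrix.GeneralLinearGroup (Fin n) R)).toLinearMap -
        LinearMap.id) := by
  ext f
  simp [mem_invariants, sub_eq_zero]

theorem map_baseChange_eq_span (P : Submodule R (MvPolynomial (Fin n) R)) :
    (P.baseChange R').map ((algebraTensorAlgEquiv (σ := Fin n) R R').toLinearEquiv :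
      R' ⊗[R] MvPolynomial (Fin n) R →ₗ[R'] MvPolynomial (Fin n) R') =
      Submodule.span R' (MvPolynomial.map (algebraMap R R') '' (P : Set _)) := by
  rw [Submodule.baseChange_eq_span, Submodule.map_span, Submodule.map_coe, ← Set.image_comp]
  congr 1
  refine Set.image_congr fun p _ => ?_
  simp

theorem toSubmodule_invariants_map_eq_span [Module.Flat R R']
    (G : Subgroup (Matrix.GeneralLinearGroup (Fin n) R)) [Finite G] :
    Subalgebra.toSubmodule (invariants (G.map (glMap (algebraMap R R')))) =
      Submodule.span R' (MvPolynomial.map (algebraMap R R') '' invariants G) := by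
  rw [← Subalgebra.coe_toSubmodule, ← map_baseChange_eq_span,
    toSubmodule_invariants_eq_iInf_ker G, Submodule.baseChange_iInf_ker]
  ext f
  have hfixed (σ : Matrix.GeneralLinearGroup (Fin n) R) :
      ((glAct σ).toLinearMap - LinearMap.id).baseChange R'
          ((algebraTensorAlgEquiv R R').symm f) = 0 ↔
        glAct (glMap (algebraMap R R') σ) f = f := by
    rw [LinearMap.baseChange_sub, LinearMap.sub_apply, LinearMap.baseChange_id, LinearMap.id_apply,
      sub_eq_zero, AlgEquiv.eq_symm_apply, algebraTensorAlgEquiv_baseChange_glAct,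
      AlgEquiv.apply_symm_apply]
  rw [Submodule.mem_map_equiv]
  simp only [Subalgebra.mem_toSubmodule, mem_invariants, Submodule.mem_iInf, LinearMap.mem_ker,
    Subgroup.mem_map, forall_exists_index, and_imp, forall_apply_eq_imp_iff₂, Subtype.forall]
  exact forall₂_congr fun σ _ => (hfixed σ).symm

theorem span_image_map_inj [Module.FaithfullyFlat R R']
    {P Q : Submodule R (MvPolynomial (Fin n) R)} :
    Submodule.span R' (MvPolynomial.map (algebraMap R R') '' (P : Set (MvPolynomial (Fin n) R)))
        = Submodule.span R'
          (MvPolynomial.map (algebraMap R R') '' (Q : Set (MvPolynomial (Fin n) R))) ↔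
      P = Q := by
  rw [← map_baseChange_eq_span, ← map_baseChange_eq_span,
    (Submodule.map_injective_of_injective (AlgEquiv.injective _)).eq_iff, Submodule.baseChange_inj]

def lowDegreeInvariants (G : Subgroup (Matrix.GeneralLinearGroup (Fin n) R)) (d : ℕ) :
    Set (MvPolynomial (Fin n) R) :=
  {f | f ∈ invariants G ∧ ∃ i ≤ d, f.IsHomogeneous i}

theorem adjoin_lowDegreeInvariants_map [Module.Flat R R']
    (G : Subgroup (Matrix.GeneralLinearGroup (Fin n) R)) [Finite G] (d : ℕ) :
    Algebra.adjoin R' (lowDegreeInvariants (G.map (glMap (algebraMap R R'))) d) =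
      Algebra.adjoin R' (MvPolynomial.map (algebraMap R R') '' lowDegreeInvariants G d) := by
  apply le_antisymm
  · refine Algebra.adjoin_le fun f ⟨hf, i, hi, hfi⟩ => Algebra.span_le_adjoin R' _ ?_
    have hspan := Submodule.mem_map_of_mem (f := homogeneousComponent i)
      ((toSubmodule_invariants_map_eq_span (R' := R') G).le hf)
    rw [Submodule.map_span, homogeneousComponent_eq_self hfi] at hspan
    refine Submodule.span_mono ?_ hspan
    rintro _ ⟨_, ⟨g, hg, rfl⟩, rfl⟩
    refine ⟨homogeneousComponent i g, ⟨homogeneousComponent_mem_invariants hg i, i, hi,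
      homogeneousComponent_isHomogeneous i g⟩, ?_⟩
    exact apply_homogeneousComponent (MvPolynomial.map (algebraMap R R')).toAddMonoidHom
      (fun _ _ hp => hp.map _) i g
  · refine Algebra.adjoin_mono ?_
    rintro _ ⟨f, ⟨hf, i, hi, hfi⟩, rfl⟩
    exact ⟨map_mem_invariants hf, i, hi, hfi.map _⟩

theorem genByDeg_map_iff [Module.FaithfullyFlat R R']
    (G : Subgroup (Matrix.GeneralLinearGroup (Fin n) R)) [Finite G] (d : ℕ) :
    genByDeg R' (G.map (glMap (algebraMap R R'))) d ↔ genByDeg R G d := by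
  have hadjoin : Submodule.span R' (MvPolynomial.map (algebraMap R R') ''
      Algebra.adjoin R (lowDegreeInvariants G d)) = Subalgebra.toSubmodule
        (Algebra.adjoin R' (MvPolynomial.map (algebraMap R R') '' lowDegreeInvariants G d)) :=
    Algebra.span_image_adjoin R' (mapAlgHom (Algebra.ofId R R')) _
  change Algebra.adjoin R' (lowDegreeInvariants _ d) = _ ↔
    Algebra.adjoin R (lowDegreeInvariants G d) = _
  rw [adjoin_lowDegreeInvariants_map, ← Subalgebra.toSubmodule_injective.eq_iff,
    ← Subalgebra.toSubmodule_injective.eq_iff, toSubmodule_invariants_map_eq_span, ← hadjoin,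
    ← Subalgebra.coe_toSubmodule, ← Subalgebra.coe_toSubmodule (invariants G)]
  exact span_image_map_inj

end Invariants

/-- If `R'` is a faithfully flat `R`-algebra and `G ⊆ GLₙ(R)` is a finite
subgroup, then for every `d : ℕ`, `R[x₁,…,xₙ]^G` is generated as an `R`-algebra by its
homogeneous elements of degree at most `d` iff `R'[x₁,…,xₙ]^G` is generated as an
`R'`-algebra by its homogeneous elements of degree at most `d`; in particular
`β_{R'}(G) = β_R(G)`. -/
theorem stmt_1 {n : ℕ} (R R' : Type*) [CommRing R] [CommRing R'] [Algebra R R']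
    [Module.FaithfullyFlat R R'] (G : Subgroup (Matrix.GeneralLinearGroup (Fin n) R))
    [Finite G] :
    (∀ d : ℕ, genByDeg R' (G.map (glMap (algebraMap R R'))) d ↔ genByDeg R G d) ∧
    sInf {d : ℕ | genByDeg R' (G.map (glMap (algebraMap R R'))) d} =
      sInf {d : ℕ | genByDeg R G d} :=
  ⟨genByDeg_map_iff G, congrArg sInf (Set.ext (genByDeg_map_iff G))⟩
end

section
/- Let R be a local ring with maximal ideal 𝔪 and residue field F = R/𝔪, let S be a finitely generated graded R-algebra, let f_1,…,f_n ∈ S be homogeneous elements, and set A = R[f_1,…,f_n] ⊆ S. Set S_F = S ⊗_R F and let A_F = A ⊗_R F be the F-subalgebra of S_F generated by the classes of f_1,…,f_n. If S_F is finitely generated as an A_F-module, then S is finitely generated as an A-module. -/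
/-!
Write `A = R[f₁,…,fₙ]`, `F = R/𝔪` and `π : S → F ⊗[R] S = S/𝔪S`. Since `π` is surjective and
`F ⊗[R] S` is spanned over `A_F = π(A)` by finitely many elements, we can lift them to finitely
many homogeneous `gⱼ ∈ S`; then `N = A·g₁ + ⋯ + A·gₖ` is a graded `R`-submodule of `S` with
`S = N + 𝔪S`. Each graded piece `S_d` is a finitely generated `R`-module (`S` is a quotient of a
polynomial ring with positive weights), so Nakayama's lemma applied to `S_d ⊆ N_d + 𝔪S_d` gives
`S_d ⊆ N` for every `d`, i.e. `N = S`.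
-/

open TensorProduct DirectSum

section GradedModule

variable {ι R M : Type*} [DecidableEq ι]

section Semiring

variable [Semiring R] [AddCommMonoid M] [Module R M] (ℳ : ι → Submodule R M)
  [Decomposition ℳ]

theorem Submodule.isHomogeneous_span {s : Set M} (hs : ∀ x ∈ s, SetLike.IsHomogeneousElem ℳ x) :
    SetLike.IsHomogeneous ℳ (span R s) := by
  intro i x hx
  induction hx using Submodule.span_induction with
  | mem x hx =>
    obtain ⟨j, hj⟩ := hs x hx
    by_cases hij : j = i
    · rw [← hij, decompose_of_mem_same ℳ hj]
      exact subset_span hx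
    · rw [decompose_of_mem_ne ℳ hj hij]
      exact zero_mem _
  | zero => simp
  | add x y _ _ hx hy => simpa using add_mem hx hy
  | smul r x _ hx =>
    rw [decompose_smul, DirectSum.smul_apply, SetLike.val_smul]
    exact smul_mem _ r hx

theorem DirectSum.exists_finset_isHomogeneousElem_span_le_span (s : Finset M) :
    ∃ G : Finset M, (∀ g ∈ G, SetLike.IsHomogeneousElem ℳ g) ∧
      Submodule.span R (s : Set M) ≤ Submodule.span R (G : Set M) := by
  classical
  refine ⟨s.biUnion fun x ↦ (decompose ℳ x).support.image fun i ↦ (decompose ℳ x i : M),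
    ?_, Submodule.span_le.2 fun x hx ↦ ?_⟩
  · simp only [Finset.mem_biUnion, Finset.mem_image]
    rintro _ ⟨x, -, i, -, rfl⟩
    exact ⟨i, (decompose ℳ x i).2⟩
  · rw [← sum_support_decompose ℳ x]
    exact Submodule.sum_mem _ fun i hi ↦ Submodule.subset_span <|
      Finset.mem_biUnion.2 ⟨x, hx, Finset.mem_image_of_mem _ hi⟩

end Semiring

variable [CommRing R] [AddCommGroup M] [Module R M] (ℳ : ι → Submodule R M) [Decomposition ℳ]

theorem DirectSum.decompose_mem_smul_of_mem_smul_top {I : Ideal R} {x : M}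
    (hx : x ∈ I • (⊤ : Submodule R M)) (i : ι) :
    (decompose ℳ x i : M) ∈ I • ℳ i := by
  refine Submodule.smul_induction_on hx (fun r hr y _ ↦ ?_) fun x y hx hy ↦ ?_
  · rw [decompose_smul, DirectSum.smul_apply, SetLike.val_smul]
    exact Submodule.smul_mem_smul hr (decompose ℳ y i).2
  · rw [decompose_add, DirectSum.add_apply, Submodule.coe_add]
    exact add_mem hx hy

theorem Submodule.eq_top_of_isHomogeneous_of_le_sup_smul (hfg : ∀ i, (ℳ i).FG)
    {I : Ideal R} (hI : I ≤ (⊥ : Ideal R).jacobson) {N : Submodule R M}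
    (hN : SetLike.IsHomogeneous ℳ N) (h : ⊤ ≤ N ⊔ I • ⊤) : N = ⊤ := by
  have hpiece (i : ι) : ℳ i ≤ N ⊔ I • ℳ i := by
    intro x hx
    obtain ⟨n, hn, y, hy, hxny⟩ := mem_sup.1 (h (mem_top : x ∈ ⊤))
    rw [← decompose_of_mem_same ℳ hx, ← hxny, decompose_add, DirectSum.add_apply, coe_add]
    exact add_mem_sup (hN i hn) (decompose_mem_smul_of_mem_smul_top ℳ hy i)
  refine eq_top_iff.2 fun x _ ↦ (AddSubmonoidClass.IsHomogeneous.mem_iff ℳ N hN).2 fun i ↦ ?_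
  exact le_of_le_smul_of_le_jacobson_bot (hfg i) hI (hpiece i) (decompose ℳ x i).2

end GradedModule

section

variable {ι R A M : Type*} [DecidableEq ι] [Semiring R] [AddCommMonoid A] [Module R A]
  [AddCommMonoid M] [Module R M] (ℬ : ι → Submodule R A) (ℳ : ι → Submodule R M)
  [Decomposition ℬ] [Decomposition ℳ] {φ : A →ₗ[R] M}

theorem DirectSum.decompose_map_of_forall_map_le (hφ : ∀ i, (ℬ i).map φ ≤ ℳ i) (p : A) (i : ι) :
    φ (decompose ℬ p i) = decompose ℳ (φ p) i := by
  induction p using Decomposition.inductionOn ℬ with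
  | zero => simp
  | @homogeneous j p =>
    have hp : φ p ∈ ℳ j := hφ j ⟨p, p.2, rfl⟩
    by_cases hij : j = i
    · subst hij
      rw [decompose_of_mem_same ℬ p.2, decompose_of_mem_same ℳ hp]
    · rw [decompose_of_mem_ne ℬ p.2 hij, decompose_of_mem_ne ℳ hp hij, map_zero]
  | add p q hp hq => simp [hp, hq]

theorem Submodule.map_eq_of_surjective_of_forall_map_le (hφ : ∀ i, (ℬ i).map φ ≤ ℳ i)
    (hsurj : Function.Surjective φ) (i : ι) : (ℬ i).map φ = ℳ i := by
  refine (hφ i).antisymm fun x hx ↦ ?_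
  obtain ⟨p, rfl⟩ := hsurj x
  refine ⟨decompose ℬ p i, (decompose ℬ p i).2, ?_⟩
  rw [decompose_map_of_forall_map_le ℬ ℳ hφ, decompose_of_mem_same ℳ hx]

end

section

variable {ι R S : Type*} [DecidableEq ι] [AddCommMonoid ι] [CommSemiring R] [CommSemiring S]
  [Algebra R S] (𝒜 : ι → Submodule R S) [GradedAlgebra 𝒜]

theorem MvPolynomial.IsWeightedHomogeneous.aeval_mem {σ : Type*} {w : σ → ι} {g : σ → S}
    (hg : ∀ i, g i ∈ 𝒜 (w i)) {p : MvPolynomial σ R} {d : ι} (hp : p.IsWeightedHomogeneous w d) :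
    aeval g p ∈ 𝒜 d := by
  rw [p.as_sum, map_sum]
  refine Submodule.sum_mem _ fun n hn ↦ ?_
  rw [aeval_monomial, ← Algebra.smul_def, ← hp (mem_support_iff.1 hn), Finsupp.weight_apply]
  exact Submodule.smul_mem _ _ (SetLike.prod_pow_mem_graded 𝒜 _ _ _ fun i _ ↦ hg i)

theorem isHomogeneous_adjoin_mul_span {s t : Set S} (hs : ∀ x ∈ s, SetLike.IsHomogeneousElem 𝒜 x)
    (ht : ∀ x ∈ t, SetLike.IsHomogeneousElem 𝒜 x) :
    SetLike.IsHomogeneous 𝒜 (Subalgebra.toSubmodule (Algebra.adjoin R s) * Submodule.span R t) := by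
  rw [Algebra.adjoin_eq_span, Submodule.span_mul_span]
  refine Submodule.isHomogeneous_span 𝒜 ?_
  rintro _ ⟨b, hb, g, hg, rfl⟩
  exact (Submonoid.closure_le (S := SetLike.homogeneousSubmonoid 𝒜)).2 hs hb |>.mul (ht g hg)

end

section

variable {R S : Type*} [CommRing R] [CommRing S] [Algebra R S]
  (𝒜 : ℕ → Submodule R S) [GradedAlgebra 𝒜]

theorem GradedAlgebra.exists_finset_adjoin_eq_top_of_zero_eq_one (h0 : 𝒜 0 = 1)
    [Algebra.FiniteType R S] :
    ∃ s : Finset S, Algebra.adjoin R (s : Set S) = ⊤ ∧ ∀ x ∈ s, ∃ n ≠ 0, x ∈ 𝒜 n := by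
  classical
  obtain ⟨s₀, hs₀⟩ := Algebra.FiniteType.out (R := R) (A := S)
  obtain ⟨G, hGhom, hG⟩ := exists_finset_isHomogeneousElem_span_le_span 𝒜 s₀
  set Gpos := G.filter fun x ↦ ∃ n ≠ 0, x ∈ 𝒜 n
  have hGpos : (G : Set S) ⊆ Algebra.adjoin R (Gpos : Set S) := by
    intro g hg
    obtain ⟨n, hn⟩ := hGhom g hg
    by_cases hn0 : n = 0
    · rw [hn0, h0] at hn
      obtain ⟨r, rfl⟩ := Submodule.mem_one.1 hn
      exact Subalgebra.algebraMap_mem _ r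
    · exact Algebra.subset_adjoin (Finset.mem_filter.2 ⟨hg, n, hn0, hn⟩)
  refine ⟨Gpos, eq_top_iff.2 ?_, fun x hx ↦ (Finset.mem_filter.1 hx).2⟩
  rw [← hs₀, Algebra.adjoin_le_iff]
  intro x hx
  exact Algebra.adjoin_le hGpos (Algebra.span_le_adjoin R _ (hG (Submodule.subset_span hx)))

theorem GradedAlgebra.fg_of_finiteType (h0 : 𝒜 0 = 1) [Algebra.FiniteType R S] (d : ℕ) :
    (𝒜 d).FG := by
  obtain ⟨s, hs, hpos⟩ := GradedAlgebra.exists_finset_adjoin_eq_top_of_zero_eq_one 𝒜 h0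
  choose! w hw0 hw using hpos
  let φ := MvPolynomial.aeval (R := R) ((↑) : s → S)
  have hsurj : Function.Surjective φ := by
    rw [← AlgHom.range_eq_top, ← Algebra.adjoin_range_eq_range_aeval, Subtype.range_coe]
    exact hs
  let w' : s → ℕ := fun i ↦ w i
  let _ := MvPolynomial.weightedDecomposition R w'
  rw [← Submodule.map_eq_of_surjective_of_forall_map_le
    (MvPolynomial.weightedHomogeneousSubmodule R w') 𝒜 (φ := φ.toLinearMap) ?_ hsurj d]
  · exact (MvPolynomial.weightedHomogeneousSubmodule_fg R w' (fun i ↦ hw0 _ i.2) d).map _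
  · rintro e _ ⟨p, hp, rfl⟩
    exact MvPolynomial.IsWeightedHomogeneous.aeval_mem 𝒜 (fun i ↦ hw _ i.2) hp

end

theorem Subalgebra.restrictScalars_adjoin_of_surjective {R K B : Type*} [CommSemiring R]
    [CommSemiring K] [CommSemiring B] [Algebra R K] [Algebra K B] [Algebra R B]
    [IsScalarTower R K B] (hK : Function.Surjective (algebraMap R K)) (s : Set B) :
    (Algebra.adjoin K s).restrictScalars R = Algebra.adjoin R s := by
  rw [Algebra.Subalgebra.restrictScalars_adjoin, sup_eq_right]
  rintro _ ⟨k, rfl⟩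
  obtain ⟨r, rfl⟩ := hK k
  change algebraMap K B (algebraMap R K r) ∈ _
  rw [← IsScalarTower.algebraMap_apply]
  exact Subalgebra.algebraMap_mem _ r

theorem span_adjoin_image_subset_image_mul {R K S B ι : Type*} [CommSemiring R] [CommSemiring K]
    [CommSemiring S] [CommSemiring B] [Algebra R K] [Algebra R S] [Algebra K B] [Algebra R B]
    [IsScalarTower R K B] (hK : Function.Surjective (algebraMap R K)) (φ : S →ₐ[R] B)
    (f : ι → S) (Y : Set S) :
    (Submodule.span (Algebra.adjoin K (Set.range fun i ↦ φ (f i))) (φ '' Y) : Set B) ⊆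
      φ '' (Subalgebra.toSubmodule (Algebra.adjoin R (Set.range f)) * Submodule.span R Y) := by
  set A := Subalgebra.toSubmodule (Algebra.adjoin R (Set.range f))
  have hlift : ∀ c ∈ Algebra.adjoin K (Set.range fun i ↦ φ (f i)), ∃ a ∈ A, φ a = c := by
    intro c hc
    rw [← Subalgebra.mem_restrictScalars R, Subalgebra.restrictScalars_adjoin_of_surjective hK,
      Set.range_comp' φ f, ← AlgHom.map_adjoin] at hc
    exact hc
  intro z hz
  induction hz using Submodule.span_induction with
  | mem z hz =>
    obtain ⟨y, hy, rfl⟩ := hz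
    exact ⟨y, one_mul y ▸ Submodule.mul_mem_mul (one_mem (Algebra.adjoin R _))
      (Submodule.subset_span hy), rfl⟩
  | zero => exact ⟨0, zero_mem _, map_zero φ⟩
  | add z z' _ _ hz hz' =>
    obtain ⟨n, hn, rfl⟩ := hz
    obtain ⟨n', hn', rfl⟩ := hz'
    exact ⟨n + n', add_mem hn hn', map_add φ n n'⟩
  | smul c z _ hz =>
    obtain ⟨n, hn, rfl⟩ := hz
    obtain ⟨a, ha, hac⟩ := hlift c c.2
    refine ⟨a * n, ?_, by rw [map_mul, hac]; rfl⟩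
    have := Submodule.mul_mem_mul ha hn
    rwa [← mul_assoc, (Subalgebra.isIdempotentElem_toSubmodule _).eq] at this

theorem TensorProduct.one_tmul_eq_one_tmul_iff {R M : Type*} [CommRing R] [AddCommGroup M]
    [Module R M] {I : Ideal R} {x y : M} :
    (1 : R ⧸ I) ⊗ₜ[R] x = 1 ⊗ₜ y ↔ x - y ∈ I • (⊤ : Submodule R M) := by
  rw [← (quotTensorEquivQuotSMul M I).injective.eq_iff, quotTensorEquivQuotSMul_mk_one_tmul,
    quotTensorEquivQuotSMul_mk_one_tmul, Submodule.Quotient.eq]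

theorem Function.Surjective.exists_finset_image_eq {α β : Type*} [DecidableEq α] [DecidableEq β]
    {f : α → β} (hf : Function.Surjective f) (t : Finset β) : ∃ s : Finset α, s.image f = t :=
  ⟨t.image (Function.surjInv hf), by
    rw [Finset.image_image, Function.comp_def]; simp [Function.surjInv_eq hf]⟩

/-- Let `R` be a local ring with residue field `F`, let `S` be a finitely
generated graded `R`-algebra with `S₀ = R`, let `f₁,…,fₙ ∈ S` be homogeneous and let
`A = R[f₁,…,fₙ] ⊆ S`. If `S_F = S ⊗_R F` is a finitely generated module over the
`F`-subalgebra `A_F` generated by the classes of the `fᵢ`, then `S` is a finitely generated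
`A`-module. -/
theorem stmt_5 (R S : Type*) [CommRing R] [IsLocalRing R] [CommRing S] [Algebra R S]
    (𝒜 : ℕ → Submodule R S) [GradedAlgebra 𝒜] (h0 : 𝒜 0 = 1) [Algebra.FiniteType R S]
    {m : ℕ} (f : Fin m → S) (hf : ∀ i, ∃ d, f i ∈ 𝒜 d)
    (hfin : Module.Finite
      (Algebra.adjoin (IsLocalRing.ResidueField R)
        (Set.range fun i => (Algebra.TensorProduct.includeRight
          (R := R) (A := IsLocalRing.ResidueField R) (B := S)) (f i)))
      (IsLocalRing.ResidueField R ⊗[R] S)) :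
    Module.Finite (Algebra.adjoin R (Set.range f)) S := by
  classical
  set π := Algebra.TensorProduct.includeRight (R := R) (A := IsLocalRing.ResidueField R) (B := S)
  obtain ⟨t, ht⟩ := hfin.fg_top
  obtain ⟨Y, rfl⟩ := (Algebra.TensorProduct.includeRight_surjective S
    IsLocalRing.residue_surjective).exists_finset_image_eq t
  obtain ⟨G, hGhom, hYG⟩ := exists_finset_isHomogeneousElem_span_le_span 𝒜 Y
  set N := Subalgebra.toSubmodule (Algebra.adjoin R (Set.range f)) * Submodule.span R (G : Set S)
  have hcover : ⊤ ≤ N ⊔ IsLocalRing.maximalIdeal R • ⊤ := by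
    intro x _
    have hx := ht.ge (Submodule.mem_top (x := π x))
    rw [Finset.coe_image] at hx
    obtain ⟨n, hn, hnx⟩ := span_adjoin_image_subset_image_mul
      IsLocalRing.residue_surjective π f Y hx
    rw [← add_sub_cancel n x]
    exact Submodule.add_mem_sup (mul_right_mono hYG hn)
      (TensorProduct.one_tmul_eq_one_tmul_iff.1 hnx.symm)
  have hN : N = ⊤ := Submodule.eq_top_of_isHomogeneous_of_le_sup_smul 𝒜
    (GradedAlgebra.fg_of_finiteType 𝒜 h0)
    (IsLocalRing.jacobson_eq_maximalIdeal ⊥ bot_ne_top).ge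
    (isHomogeneous_adjoin_mul_span 𝒜 (by rintro _ ⟨i, rfl⟩; exact hf i) hGhom) hcover
  set M := Submodule.span (Algebra.adjoin R (Set.range f)) (G : Set S)
  have hle : N ≤ M.restrictScalars R :=
    Submodule.mul_le.2 fun a ha y hy ↦
      M.smul_mem (⟨a, ha⟩ : Algebra.adjoin R (Set.range f))
        (Submodule.span_le_restrictScalars R _ _ hy)
  exact ⟨⟨G, (Submodule.restrictScalars_eq_top_iff ..).1 (top_unique (hN ▸ hle))⟩⟩
end

section
/- Let R be a commutative ring and let A ⊆ B be an integral extension of graded R-algebras (i.e. the inclusion A → B is a degree-preserving ring homomorphism and B is integral over A). Then for every a ∈ R the following equality of ideals of B holds: √((A_+ + (a))B) = √(B_+ + aB), where A_+ and B_+ denote the irrelevant ideals of elements of positive degree and (A_+ + (a))B is the extension to B of the ideal of A generated by A_+ and a. -/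
set_option synthInstance.maxHeartbeats 1000000
set_option maxHeartbeats 1000000

theorem stmt_9_key (R B : Type*) [CommRing R] [CommRing B] [Algebra R B]
    (ℬ : ℕ → Submodule R B) [GradedAlgebra ℬ]
    (A : Subalgebra R B)
    (hgraded : ∀ x ∈ A, ∀ i, (DirectSum.decompose ℬ x i : B) ∈ A)
    [Algebra.IsIntegral A B]
    {b : B} {i : ℕ} (hi : 0 < i) (hb : b ∈ ℬ i) :
    ∃ n, 0 < n ∧ b ^ n ∈ Ideal.span {x : B | x ∈ A ∧ ∃ i, 0 < i ∧ x ∈ ℬ i} := by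
  obtain ⟨p, hmonic, heval⟩ := Algebra.IsIntegral.isIntegral (R := A) b
  set n := p.natDegree with hn
  rcases Nat.eq_zero_or_pos n with h0 | hnpos
  · -- p = 1, so B is trivial
    have hp1 : p = 1 := Polynomial.eq_one_of_monic_natDegree_zero hmonic h0
    rw [hp1] at heval
    simp only [Polynomial.eval₂_one] at heval
    refine ⟨1, one_pos, ?_⟩
    rw [pow_one, show b = b * 1 from (mul_one b).symm, heval, mul_zero]
    exact Ideal.zero_mem _
  · refine ⟨n, hnpos, ?_⟩
    have hsum : (0 : B) = ∑ j ∈ Finset.range (n + 1), ((p.coeff j : B)) * b ^ j := by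
      rw [← heval, Polynomial.eval₂_eq_sum_range]
      exact Finset.sum_congr rfl fun j _ => rfl
    have hcn : ((p.coeff n : B)) = 1 := by
      rw [hn, hmonic.coeff_natDegree]; rfl
    rw [Finset.sum_range_succ, hcn, one_mul] at hsum
    have hbn : b ^ n = -∑ j ∈ Finset.range n, ((p.coeff j : B)) * b ^ j := by
      linear_combination -hsum
    -- apply the projection onto degree n * i
    have hbpow : ∀ j : ℕ, b ^ j ∈ ℬ (j * i) := fun j => by
      simpa [smul_eq_mul] using SetLike.pow_mem_graded j hb
    have hproj : b ^ n =
        -∑ j ∈ Finset.range n,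
          (DirectSum.decompose ℬ ((p.coeff j : B)) (n * i - j * i) : B) * b ^ j := by
      have h1 : b ^ n = (GradedAlgebra.proj ℬ (n * i)) (b ^ n) := by
        rw [GradedAlgebra.proj_apply, DirectSum.decompose_of_mem_same ℬ (hbpow n)]
      rw [h1, hbn, map_neg, map_sum]
      congr 1
      refine Finset.sum_congr rfl fun j hj => ?_
      rw [GradedAlgebra.proj_apply]
      exact DirectSum.coe_decompose_mul_of_right_mem_of_le (b_mem := hbpow j)
        (h := Nat.mul_le_mul_right i (Nat.le_of_lt (Finset.mem_range.mp hj)))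
    rw [hproj]
    refine neg_mem (Ideal.sum_mem _ fun j hj => ?_)
    refine Ideal.mul_mem_right _ _ (Ideal.subset_span ?_)
    refine ⟨hgraded _ (p.coeff j).2 _, n * i - j * i, ?_, SetLike.coe_mem _⟩
    have hjn : j < n := Finset.mem_range.mp hj
    have : j * i < n * i := (Nat.mul_lt_mul_right hi).mpr hjn
    omega

/-- Let `A ⊆ B` be an integral extension of graded `R`-algebras (here `B`
is a graded `R`-algebra with `B₀ = R` and `A` is a graded subalgebra of `B` over which `B`
is integral). Then for every `a ∈ R` we have `√((A₊ + (a))B) = √(B₊ + aB)` as ideals of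
`B`, where `A₊` and `B₊` are generated by the homogeneous elements of positive degree of
`A` resp. `B`. -/
theorem stmt_9 (R B : Type*) [CommRing R] [CommRing B] [Algebra R B]
    (ℬ : ℕ → Submodule R B) [GradedAlgebra ℬ] (h0 : ℬ 0 = 1)
    (A : Subalgebra R B)
    (hgraded : ∀ x ∈ A, ∀ i, (DirectSum.decompose ℬ x i : B) ∈ A)
    [Algebra.IsIntegral A B]
    (a : R) :
    (Ideal.span ({x : B | x ∈ A ∧ ∃ i, 0 < i ∧ x ∈ ℬ i} ∪ {algebraMap R B a})).radical =
      (Ideal.span ({x : B | ∃ i, 0 < i ∧ x ∈ ℬ i} ∪ {algebraMap R B a})).radical := by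
  apply le_antisymm
  · exact Ideal.radical_mono (Ideal.span_mono
      (Set.union_subset_union_left _ fun x hx => hx.2))
  · rw [Ideal.radical_le_radical_iff]
    rw [Ideal.span_le]
    rintro x (⟨i, hi, hx⟩ | hx)
    · obtain ⟨n, hn, hmem⟩ := stmt_9_key R B ℬ A hgraded hi hx
      exact ⟨n, Ideal.span_mono Set.subset_union_left hmem⟩
    · exact Ideal.le_radical (Ideal.subset_span (Set.mem_union_right _ hx))
end
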